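/- arXiv:2307.11053 — 4 statements merged into one kernel-verified Lean document; each statement's English description precedes it below -/
import Mathlib

section
/- Let D ≥ 1 and k ≥ 1 be natural numbers, and let g be a permutation of Fin k. Let P_g denote the linear map on the k-fold tensor power (ℂ^D)^{⊗k} that permutes the tensor factors according to g (sending v_1 ⊗ ⋯ ⊗ v_k to the elementary tensor whose g(i)-th factor is v_i). Then the trace of P_g equals D^{C(g)}, where C(g) is the number of orbits of g acting on Fin k (cycles of g, counting fixed points as cycles of length one). -/
open scoped TensorProduct

/-- `cycleCount g` is the number of orbits of the permutation `g` acting on its underlying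
set, i.e. the number of cycles of `g` counting fixed points as cycles of length one. -/
noncomputable def cycleCount {α : Type*} (g : Equiv.Perm α) : ℕ :=
  Nat.card (MulAction.orbitRel.Quotient (Subgroup.zpowers g) α)

section Aux

variable (D k : ℕ)

/-- The evaluation multilinear map `v ↦ fun f => ∏ i, v i (f i)`. -/
noncomputable def evalML : MultilinearMap ℂ (fun _ : Fin k => (Fin D → ℂ))
    ((Fin k → Fin D) → ℂ) :=
  MultilinearMap.pi fun f =>
    (MultilinearMap.mkPiAlgebra ℂ (Fin k) ℂ).compLinearMap fun i => LinearMap.proj (f i)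

lemma evalML_apply (v : Fin k → (Fin D → ℂ)) (f : Fin k → Fin D) :
    evalML D k v f = ∏ i, v i (f i) := rfl

/-- Forward map from the tensor power to functions. -/
noncomputable def fwd : (⨂[ℂ] _ : Fin k, (Fin D → ℂ)) →ₗ[ℂ] ((Fin k → Fin D) → ℂ) :=
  PiTensorProduct.lift (evalML D k)

/-- Backward map. -/
noncomputable def bwd : ((Fin k → Fin D) → ℂ) →ₗ[ℂ] (⨂[ℂ] _ : Fin k, (Fin D → ℂ)) :=
  (Pi.basisFun ℂ (Fin k → Fin D)).constr ℂ
    (fun f => PiTensorProduct.tprod ℂ (fun i => Pi.single (f i) 1))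

lemma fwd_tprod (v : Fin k → (Fin D → ℂ)) :
    fwd D k (PiTensorProduct.tprod ℂ v) = fun f => ∏ i, v i (f i) := by
  simp [fwd, evalML_apply]
  rfl

lemma bwd_single (f : Fin k → Fin D) :
    bwd D k (Pi.basisFun ℂ (Fin k → Fin D) f)
      = PiTensorProduct.tprod ℂ (fun i => Pi.single (f i) 1) :=
  Module.Basis.constr_basis _ _ _ _

/-- The tensor power is linearly equivalent to functions on `Fin k → Fin D`. -/
noncomputable def tensorEquiv :
    ((Fin k → Fin D) → ℂ) ≃ₗ[ℂ] (⨂[ℂ] _ : Fin k, (Fin D → ℂ)) := by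
  refine LinearEquiv.ofLinear (bwd D k) (fwd D k) ?_ ?_
  · apply PiTensorProduct.ext
    apply MultilinearMap.ext
    intro v
    simp only [LinearMap.compMultilinearMap_apply, LinearMap.coe_comp, Function.comp_apply,
      LinearMap.id_coe, id_eq]
    rw [fwd_tprod]
    have hv : ∀ i : Fin k, v i = ∑ d : Fin D, v i d • (Pi.single d 1 : Fin D → ℂ) := by
      intro i
      funext x
      simp [Pi.single_apply, Finset.sum_apply, mul_comm]
    -- expand tprod v
    have expand : (PiTensorProduct.tprod ℂ v)
        = ∑ f : Fin k → Fin D, (∏ i, v i (f i)) •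
            PiTensorProduct.tprod ℂ (fun i => (Pi.single (f i) 1 : Fin D → ℂ)) := by
      conv_lhs => rw [show v = fun i => ∑ d : Fin D, v i d • (Pi.single d 1 : Fin D → ℂ) from
        funext hv]
      rw [MultilinearMap.map_sum]
      exact Finset.sum_congr rfl fun f _ => MultilinearMap.map_smul_univ _ _ _
    rw [expand]
    have harg : (fun f => ∏ i, v i (f i))
        = ∑ f : Fin k → Fin D, (∏ i, v i (f i)) • Pi.basisFun ℂ (Fin k → Fin D) f := by
      have := Module.Basis.sum_repr (Pi.basisFun ℂ (Fin k → Fin D)) (fun f => ∏ i, v i (f i))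
      simpa [Pi.basisFun_repr] using this.symm
    rw [harg, map_sum]
    refine Finset.sum_congr rfl fun f _ => ?_
    rw [map_smul, bwd_single]
  · apply (Pi.basisFun ℂ (Fin k → Fin D)).ext
    intro f
    simp only [LinearMap.coe_comp, Function.comp_apply, LinearMap.id_coe, id_eq]
    rw [bwd_single, fwd_tprod]
    funext f'
    by_cases h : f = f'
    · subst h
      simp [Pi.basisFun_apply, Pi.single_apply]
    · have : ∃ i, f i ≠ f' i := by
        by_contra hc
        push_neg at hc
        exact h (funext hc)
      obtain ⟨i, hi⟩ := this
      rw [Finset.prod_eq_zero (Finset.mem_univ i) (by simp [Pi.single_apply, hi])]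
      simp [Pi.basisFun_apply, Pi.single_apply, eq_comm, h]

end Aux

lemma fixed_card (k D : ℕ) (g : Equiv.Perm (Fin k))
    : Nat.card {f : Fin k → Fin D // ∀ x, f (g x) = f x} = D ^ cycleCount g := by
  have key : ∀ (f : Fin k → Fin D) (_ : ∀ x, f (g x) = f x) (z : ℤ) (x : Fin k),
      f ((g ^ z) x) = f x := by
    intro f hf z
    induction z using Int.induction_on with
    | zero => simp
    | succ n ih =>
        intro x
        rw [zpow_add_one, Equiv.Perm.mul_apply]
        exact (ih (g x)).trans (hf x)
    | pred n ih =>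
        intro x
        have hinv : ∀ y, f (g⁻¹ y) = f y := by
          intro y
          rw [← hf, show g (g⁻¹ y) = y from Equiv.apply_symm_apply g y]
        have hz : g ^ (-(n:ℤ) - 1) = g⁻¹ * g ^ (-(n:ℤ)) := by group
        rw [hz, Equiv.Perm.mul_apply]
        exact (hinv _).trans (ih x)
  let Q := MulAction.orbitRel.Quotient (Subgroup.zpowers g) (Fin k)
  have e : {f : Fin k → Fin D // ∀ x, f (g x) = f x} ≃ (Q → Fin D) := by
    refine
      { toFun := fun f => Quotient.lift f.1 ?_
        invFun := fun h => ⟨fun x => h ⟦x⟧, ?_⟩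
        left_inv := fun f => rfl
        right_inv := fun h => ?_ }
    · rintro a b ⟨⟨u, z, rfl⟩, rfl⟩
      exact key f.1 f.2 z b
    · intro x
      have : (⟦g x⟧ : Q) = ⟦x⟧ :=
        Quotient.sound ⟨⟨g, Subgroup.mem_zpowers g⟩, rfl⟩
      show h ⟦g x⟧ = h ⟦x⟧
      rw [this]
    · funext q
      induction q using Quotient.inductionOn with
      | h x => rfl
  rw [Nat.card_congr e, Nat.card_fun, Nat.card_eq_fintype_card (α := Fin D),
    Fintype.card_fin]
  rfl

/-- The trace of the linear map permuting the factors of the `k`-fold tensor power of `ℂ^D`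
according to a permutation `g` equals `D^{C(g)}`, where `C(g)` is the number of cycles of `g`. -/
theorem trace_tensor_permutation (D k : ℕ) (hD : 1 ≤ D) (hk : 1 ≤ k)
    (g : Equiv.Perm (Fin k))
    (P : (⨂[ℂ] _ : Fin k, (Fin D → ℂ)) →ₗ[ℂ] (⨂[ℂ] _ : Fin k, (Fin D → ℂ)))
    (hP : ∀ v : Fin k → (Fin D → ℂ),
      P (PiTensorProduct.tprod ℂ v) = PiTensorProduct.tprod ℂ (fun j => v (g⁻¹ j))) :
    LinearMap.trace ℂ _ P = (D : ℂ) ^ cycleCount g := by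
  classical
  set b : Module.Basis (Fin k → Fin D) ℂ (⨂[ℂ] _ : Fin k, (Fin D → ℂ)) :=
    (Pi.basisFun ℂ (Fin k → Fin D)).map (tensorEquiv D k) with hb
  have hbf : ∀ f : Fin k → Fin D,
      b f = PiTensorProduct.tprod ℂ (fun i => (Pi.single (f i) 1 : Fin D → ℂ)) := by
    intro f
    rw [hb, Module.Basis.map_apply]
    exact bwd_single D k f
  rw [LinearMap.trace_eq_matrix_trace ℂ b, Matrix.trace]
  have diag : ∀ f : Fin k → Fin D,
      (LinearMap.toMatrix b b) P f f = if (∀ x, f (g x) = f x) then (1:ℂ) else 0 := by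
    intro f
    rw [LinearMap.toMatrix_apply, hbf, hP]
    have harg : (fun j => (fun i => (Pi.single (f i) 1 : Fin D → ℂ)) (g⁻¹ j))
        = fun i => (Pi.single ((f ∘ ⇑g⁻¹) i) 1 : Fin D → ℂ) := rfl
    rw [harg, ← hbf, b.repr_self_apply]
    have hiff : (f ∘ ⇑g⁻¹ = f) ↔ ∀ x, f (g x) = f x := by
      constructor
      · intro h x
        have := congrFun h (g x)
        simpa [Function.comp] using this.symm
      · intro h
        funext y
        simpa [Function.comp] using (h (g⁻¹ y)).symm
    exact if_congr hiff rfl rfl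
  rw [Finset.sum_congr rfl fun f _ => (by rw [Matrix.diag_apply, diag f])]
  rw [Finset.sum_boole]
  have : (Finset.univ.filter (fun f : Fin k → Fin D => ∀ x, f (g x) = f x)).card
      = D ^ cycleCount g := by
    rw [← Fintype.card_subtype, ← Nat.card_eq_fintype_card]
    exact fixed_card k D g
  rw [this]
  push_cast
  ring
end

section
/- Let n, m ≥ 1 and Q = n·m. With Ω, g₀ and g_A as follows: Ω is a set of 2Q elements {1,…,Q} × {ket, bra} with replicas grouped into m blocks of n positions; g₀ is the product of the Q disjoint transpositions exchanging the ket and bra copies of each replica; g_A is the product, over all blocks j and positions i, of the disjoint transpositions swapping the ket at position i of block j with the bra at position i+1 (mod n) of block j. Then C(g₀⁻¹ g_A) = 2m: the permutation g₀⁻¹ g_A has exactly 2m cycles (two cycles of length n within each of the m blocks). -/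
/-- The replica set `Ω = {1,…,Q} × {ket, bra}` with `Q = n·m` replicas grouped into `m`
blocks of `n` positions: an element is a block `j : Fin m`, a position `i : Fin n`, and a
ket/bra label (`false` = ket, `true` = bra). -/
abbrev ReplicaSet (n m : ℕ) := (Fin m × Fin n) × Bool

/-- `g₀`: the product of the `Q = n·m` disjoint transpositions `(k k̄)` exchanging the ket
and bra copies of each replica. -/
def gZero (n m : ℕ) : Equiv.Perm (ReplicaSet n m) :=
  Equiv.prodCongr (Equiv.refl (Fin m × Fin n)) (Equiv.swap false true)

/-- `g_A`: the product, over all blocks `j` and positions `i`, of the disjoint transpositions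
swapping the ket at position `i` of block `j` with the bra at position `i+1 (mod n)` of
block `j`. -/
def gA (n m : ℕ) [NeZero n] : Equiv.Perm (ReplicaSet n m) where
  toFun x := ((x.1.1, if x.2 then x.1.2 - 1 else x.1.2 + 1), !x.2)
  invFun x := ((x.1.1, if x.2 then x.1.2 - 1 else x.1.2 + 1), !x.2)
  left_inv := by rintro ⟨⟨j, i⟩, b⟩; cases b <;> simp
  right_inv := by rintro ⟨⟨j, i⟩, b⟩; cases b <;> simp

/-!
In block `j` the permutation `g₀⁻¹ g_A` fixes the ket/bra label and moves the position by
`+1` on kets and by `-1` on bras. So its cycles are exactly the fibres of the projection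
`((j, i), b) ↦ (j, b)`: each is a full rotation of `Fin n`, and there are `2m` of them.
-/

open Equiv Equiv.Perm

theorem orbitRel_zpowers_iff_sameCycle {α : Type*} (g : Perm α) (x y : α) :
    MulAction.orbitRel (Subgroup.zpowers g) α x y ↔ g.SameCycle y x := by
  rw [MulAction.orbitRel_apply, MulAction.mem_orbit_iff, Subgroup.exists_zpowers]
  rfl

theorem cycleCount_eq_card_of_sameCycle_iff {α β : Type*} (g : Perm α) (p : α → β)
    (hp : Function.Surjective p) (hcycle : ∀ x y, g.SameCycle x y ↔ p x = p y) :
    cycleCount g = Nat.card β :=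
  Nat.card_congr <| (Quotient.congrRight fun x y => by
      rw [orbitRel_zpowers_iff_sameCycle, hcycle, Setoid.ker_def, eq_comm]).trans
    (Setoid.quotientKerEquivOfSurjective p hp)

section DomainWall

variable {n m : ℕ} [NeZero n]

theorem gZero_inv_mul_gA_apply (j : Fin m) (i : Fin n) (b : Bool) :
    ((gZero n m)⁻¹ * gA n m) ((j, i), b) = ((j, if b then i - 1 else i + 1), b) := by
  cases b <;> simp [gZero, gA, Perm.mul_apply, Perm.inv_def, prodCongr_symm]

open Fin.NatCast in
theorem gZero_inv_mul_gA_pow_apply (k : ℕ) (j : Fin m) (i : Fin n) (b : Bool) :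
    (((gZero n m)⁻¹ * gA n m) ^ k) ((j, i), b) = ((j, if b then i - k else i + k), b) := by
  induction k generalizing i with
  | zero => cases b <;> simp
  | succ k ih =>
    rw [pow_succ, Perm.mul_apply, gZero_inv_mul_gA_apply, ih]
    cases b <;> simp only [Bool.false_eq_true, if_true, if_false, Nat.cast_succ]
    · rw [add_assoc, add_comm 1]
    · rw [sub_sub, add_comm 1]

theorem sameCycle_gZero_inv_mul_gA_iff (x y : ReplicaSet n m) :
    ((gZero n m)⁻¹ * gA n m).SameCycle x y ↔ (x.1.1, x.2) = (y.1.1, y.2) := by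
  obtain ⟨⟨j, i⟩, b⟩ := x
  obtain ⟨⟨j', i'⟩, b'⟩ := y
  constructor
  · intro hxy
    obtain ⟨k, hk⟩ := hxy.exists_nat_pow_eq
    rw [← hk, gZero_inv_mul_gA_pow_apply]
  · intro hxy
    obtain ⟨rfl, rfl⟩ := Prod.mk.inj hxy
    refine ⟨((if b then (i - i').val else (i' - i).val : ℕ) : ℤ), ?_⟩
    rw [zpow_natCast, gZero_inv_mul_gA_pow_apply]
    cases b <;> simp [Fin.cast_val_eq_self]

end DomainWall

theorem cycleCount_gZero_inv_gA_general (n m : ℕ) [NeZero n] :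
    cycleCount ((gZero n m)⁻¹ * gA n m) = 2 * m := by
  rw [cycleCount_eq_card_of_sameCycle_iff _ (fun x : ReplicaSet n m => (x.1.1, x.2))
    (fun ⟨j, b⟩ => ⟨((j, 0), b), rfl⟩) sameCycle_gZero_inv_mul_gA_iff]
  simp [Nat.card_eq_fintype_card, mul_comm]

/-- The domain-wall permutation `g₀⁻¹ g_A` has exactly `2m` cycles (two cycles of length
`n` within each of the `m` blocks). -/
theorem cycleCount_gZero_inv_gA (n m : ℕ) [NeZero n] (hn : 1 ≤ n) (hm : 1 ≤ m) :
    cycleCount ((gZero n m)⁻¹ * gA n m) = 2 * m :=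
  cycleCount_gZero_inv_gA_general n m
end

section
/- Let χ ≥ 1 and d ≥ 1, and let B¹, …, B^d be χ×χ complex matrices. Let T = Σ_{s=1}^d B^s ⊗ conj(B^s) be the χ²×χ² matrix given by the sum of Kronecker products of each B^s with its entrywise complex conjugate. Then the spectral radius of T is itself an eigenvalue of T; i.e., there is a real nonnegative eigenvalue λ₁ of T with |μ| ≤ λ₁ for every eigenvalue μ of T. -/
open Matrix Finset
open scoped Kronecker

namespace TransferPF

variable {χ d : ℕ} (B : Fin d → Matrix (Fin χ) (Fin χ) ℂ)

noncomputable def Pw {n : ℕ} (w : Fin n → Fin d) : Matrix (Fin χ) (Fin χ) ℂ :=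
  (List.ofFn fun i => B (w i)).prod

lemma Pw_zero (w : Fin 0 → Fin d) : Pw B w = 1 := by simp [Pw]

lemma Pw_snoc {n : ℕ} (w : Fin n → Fin d) (s : Fin d) :
    Pw B (Fin.snoc w s) = Pw B w * B s := by
  rw [Pw, List.ofFn_succ', List.prod_concat]
  simp [Pw]

noncomputable def T : Matrix (Fin χ × Fin χ) (Fin χ × Fin χ) ℂ :=
  ∑ s, (B s) ⊗ₖ ((B s).map (starRingEnd ℂ))

lemma T_pow (n : ℕ) :
    (T B) ^ n = ∑ w : Fin n → Fin d, (Pw B w) ⊗ₖ ((Pw B w).map (starRingEnd ℂ)) := by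
  induction n with
  | zero =>
      rw [pow_zero, Fintype.sum_unique]
      simp [Pw_zero, Matrix.one_kronecker_one]
  | succ n ih =>
      rw [pow_succ, ih, T, Finset.sum_mul_sum]
      rw [← Fintype.sum_equiv (Fin.snocEquiv (fun _ => Fin d))
        (fun p : Fin d × (Fin n → Fin d) =>
          ((Pw B p.2 * B p.1) ⊗ₖ ((Pw B p.2 * B p.1).map (starRingEnd ℂ))))
        (fun w => (Pw B w) ⊗ₖ ((Pw B w).map (starRingEnd ℂ)))
        (fun p => by simp [Fin.snocEquiv, Pw_snoc])]
      rw [Fintype.sum_prod_type]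
      rw [Finset.sum_comm]
      refine Finset.sum_congr rfl fun w _ => Finset.sum_congr rfl fun s _ => ?_
      simp [Matrix.map_mul, Matrix.mul_kronecker_mul]

lemma T_pow_apply (n : ℕ) (i j k l : Fin χ) :
    ((T B) ^ n) (i, j) (k, l) = ∑ w : Fin n → Fin d,
      (Pw B w i k) * (starRingEnd ℂ) (Pw B w j l) := by
  rw [T_pow]
  simp [Matrix.kroneckerMap_apply, Matrix.sum_apply]

/-- the positive scalar sequence -/
noncomputable def aSeq (n : ℕ) : ℝ :=
  ∑ w : Fin n → Fin d, ∑ i, ∑ k, Complex.normSq (Pw B w i k)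

lemma aSeq_nonneg (n : ℕ) : 0 ≤ aSeq B n := by
  apply Finset.sum_nonneg; intro w _
  apply Finset.sum_nonneg; intro i _
  apply Finset.sum_nonneg; intro k _
  exact Complex.normSq_nonneg _

lemma diag_sum (n : ℕ) :
    ∑ i : Fin χ, ∑ k : Fin χ, ((T B) ^ n) (i, i) (k, k) = (aSeq B n : ℂ) := by
  simp_rw [T_pow_apply, Complex.mul_conj, aSeq]
  push_cast
  calc ∑ i : Fin χ, ∑ k : Fin χ, ∑ w : Fin n → Fin d,
        ((Complex.normSq (Pw B w i k) : ℂ))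
      = ∑ i : Fin χ, ∑ w : Fin n → Fin d, ∑ k : Fin χ,
        ((Complex.normSq (Pw B w i k) : ℂ)) :=
        Finset.sum_congr rfl fun i _ => Finset.sum_comm
    _ = ∑ w : Fin n → Fin d, ∑ i : Fin χ, ∑ k : Fin χ,
        ((Complex.normSq (Pw B w i k) : ℂ)) := Finset.sum_comm

end TransferPF

namespace TransferPF2

open TransferPF Filter
open scoped NNReal ENNReal

attribute [local instance] Matrix.linftyOpNormedRing Matrix.linftyOpNormedAlgebra

section helpers

variable {ι : Type*} [Fintype ι] [DecidableEq ι]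

lemma entry_le_norm (A : Matrix ι ι ℂ) (p q : ι) : ‖A p q‖ ≤ ‖A‖ := by
  have h1 : ‖A p q‖₊ ≤ ∑ j, ‖A p j‖₊ :=
    Finset.single_le_sum (f := fun j => ‖A p j‖₊) (fun j _ => zero_le) (Finset.mem_univ q)
  have h2 : (∑ j, ‖A p j‖₊) ≤ Finset.univ.sup fun i => ∑ j, ‖A i j‖₊ :=
    Finset.le_sup (f := fun i => ∑ j, ‖A i j‖₊) (Finset.mem_univ p)
  have := h1.trans h2
  rw [← coe_nnnorm, Matrix.linfty_opNorm_def]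
  exact_mod_cast this

lemma norm_le_card_mul (A : Matrix ι ι ℂ) {c : ℝ} (hc : 0 ≤ c)
    (h : ∀ p q, ‖A p q‖ ≤ c) : ‖A‖ ≤ (Fintype.card ι) * c := by
  rw [Matrix.linfty_opNorm_def]
  have hcard : ((Fintype.card ι : ℝ≥0) * c.toNNReal : ℝ) = (Fintype.card ι) * c := by
    simp [Real.coe_toNNReal _ hc]
  rw [← hcard]
  norm_cast
  apply Finset.sup_le
  intro i _
  calc ∑ j, ‖A i j‖₊ ≤ ∑ _j : ι, c.toNNReal := by
        apply Finset.sum_le_sum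
        intro j _
        have := h i j
        rw [← coe_nnnorm] at this
        apply NNReal.coe_le_coe.mp
        rwa [Real.coe_toNNReal _ hc, coe_nnnorm]
    _ = (Fintype.card ι) * c.toNNReal := by simp [Finset.sum_const, mul_comm]

lemma eventually_norm_pow_lt {A : Type*} [NormedRing A] [NormedAlgebra ℂ A] [CompleteSpace A]
    (a : A) {r : ℝ≥0} (hr : spectralRadius ℂ a < r) :
    ∀ᶠ n : ℕ in atTop, ‖a ^ n‖ ≤ (r : ℝ) ^ n := by
  have h := spectrum.pow_nnnorm_pow_one_div_tendsto_nhds_spectralRadius a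
  have hev : ∀ᶠ n : ℕ in atTop, (‖a ^ n‖₊ : ℝ≥0∞) ^ (1 / (n : ℝ)) < (r : ℝ≥0∞) :=
    h.eventually_lt_const hr
  filter_upwards [hev, Filter.eventually_ge_atTop 1] with n hn hn1
  have hnne : (n : ℝ) ≠ 0 := by positivity
  have := ENNReal.rpow_lt_rpow hn (show (0:ℝ) < (n:ℝ) by positivity)
  rw [← ENNReal.rpow_mul, one_div, inv_mul_cancel₀ hnne, ENNReal.rpow_one,
    ENNReal.rpow_natCast, ← ENNReal.coe_pow] at this
  have := (ENNReal.coe_lt_coe.mp this).le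
  calc ‖a ^ n‖ = ((‖a ^ n‖₊ : ℝ≥0) : ℝ) := by simp
    _ ≤ ((r ^ n : ℝ≥0) : ℝ) := by exact_mod_cast this
    _ = (r : ℝ) ^ n := by push_cast; ring

end helpers

end TransferPF2

namespace TransferPF3
open TransferPF TransferPF2 Filter
open scoped NNReal ENNReal Kronecker
open Matrix

variable {χ d : ℕ} (B : Fin d → Matrix (Fin χ) (Fin χ) ℂ)

lemma sq_sum_le (n : ℕ) (i k : Fin χ) :
    ∑ w : Fin n → Fin d, Complex.normSq (Pw B w i k) ≤ aSeq B n := by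
  apply Finset.sum_le_sum
  intro w _
  calc Complex.normSq (Pw B w i k)
      ≤ ∑ k', Complex.normSq (Pw B w i k') :=
        Finset.single_le_sum (f := fun k' => Complex.normSq (Pw B w i k'))
          (fun _ _ => Complex.normSq_nonneg _) (Finset.mem_univ k)
    _ ≤ ∑ i', ∑ k', Complex.normSq (Pw B w i' k') :=
        Finset.single_le_sum (f := fun i' => ∑ k', Complex.normSq (Pw B w i' k'))
          (fun _ _ => Finset.sum_nonneg fun _ _ => Complex.normSq_nonneg _)
          (Finset.mem_univ i)

lemma entry_bound (n : ℕ) (p q : Fin χ × Fin χ) :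
    ‖((T B) ^ n) p q‖ ≤ aSeq B n := by
  obtain ⟨i, j⟩ := p
  obtain ⟨k, l⟩ := q
  rw [T_pow_apply]
  calc ‖∑ w : Fin n → Fin d, Pw B w i k * (starRingEnd ℂ) (Pw B w j l)‖
      ≤ ∑ w : Fin n → Fin d, ‖Pw B w i k * (starRingEnd ℂ) (Pw B w j l)‖ :=
        norm_sum_le _ _
    _ = ∑ w : Fin n → Fin d, ‖Pw B w i k‖ * ‖Pw B w j l‖ := by
        simp [norm_mul, Complex.norm_conj]
    _ ≤ aSeq B n := ?_
  have hCS := Finset.sum_mul_sq_le_sq_mul_sq Finset.univ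
    (fun w : Fin n → Fin d => ‖Pw B w i k‖)
    (fun w : Fin n → Fin d => ‖Pw B w j l‖)
  have h1 : ∑ w : Fin n → Fin d, (‖Pw B w i k‖) ^ 2 ≤ aSeq B n := by
    simpa [Complex.sq_norm] using sq_sum_le B n i k
  have h2 : ∑ w : Fin n → Fin d, (‖Pw B w j l‖) ^ 2 ≤ aSeq B n := by
    simpa [Complex.sq_norm] using sq_sum_le B n j l
  have hnn : 0 ≤ ∑ w : Fin n → Fin d, ‖Pw B w i k‖ * ‖Pw B w j l‖ :=
    Finset.sum_nonneg fun _ _ => mul_nonneg (norm_nonneg _) (norm_nonneg _)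
  have hsq : (∑ w : Fin n → Fin d, ‖Pw B w i k‖ * ‖Pw B w j l‖) ^ 2
      ≤ (aSeq B n) ^ 2 := by
    calc _ ≤ _ := hCS
    _ ≤ aSeq B n * aSeq B n := by
        apply mul_le_mul h1 h2 (Finset.sum_nonneg fun _ _ => sq_nonneg _) (aSeq_nonneg B n)
    _ = (aSeq B n) ^ 2 := (sq _).symm
  have := Real.sqrt_le_sqrt hsq
  rwa [Real.sqrt_sq hnn, Real.sqrt_sq (aSeq_nonneg B n)] at this

end TransferPF3

namespace TransferPFMain
open TransferPF TransferPF2 TransferPF3 Filter Matrix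
open scoped NNReal ENNReal Kronecker

attribute [local instance] Matrix.linftyOpNormedRing Matrix.linftyOpNormedAlgebra

variable {χ d : ℕ}

noncomputable def linD (χ : ℕ) : Matrix (Fin χ × Fin χ) (Fin χ × Fin χ) ℂ →ₗ[ℂ] ℂ where
  toFun M := ∑ i, ∑ k, M (i,i) (k,k)
  map_add' := by intros; simp [Matrix.add_apply, Finset.sum_add_distrib]
  map_smul' := by intros; simp [Matrix.smul_apply, Finset.mul_sum, smul_eq_mul]

lemma linD_pow (B : Fin d → Matrix (Fin χ) (Fin χ) ℂ) (n : ℕ) :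
    linD χ ((T B) ^ n) = (aSeq B n : ℂ) := diag_sum B n

lemma linD_bound (M : Matrix (Fin χ × Fin χ) (Fin χ × Fin χ) ℂ) :
    ‖linD χ M‖ ≤ ((χ : ℝ) * χ) * ‖M‖ := by
  calc ‖∑ i, ∑ k, M (i,i) (k,k)‖
      ≤ ∑ i, ‖∑ k, M (i,i) (k,k)‖ := norm_sum_le _ _
    _ ≤ ∑ _i : Fin χ, ∑ _k : Fin χ, ‖M‖ := by
        apply Finset.sum_le_sum
        intro i _
        calc ‖∑ k, M (i,i) (k,k)‖ ≤ ∑ k, ‖M (i,i) (k,k)‖ :=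
              norm_sum_le _ _
          _ ≤ ∑ _k : Fin χ, ‖M‖ :=
              Finset.sum_le_sum fun k _ => entry_le_norm M (i,i) (k,k)
    _ = ((χ : ℝ) * χ) * ‖M‖ := by simp [Finset.sum_const]; ring

lemma telescope (B : Fin d → Matrix (Fin χ) (Fin χ) ℂ) (z : ℂ) (N : ℕ) :
    ((1 : Matrix (Fin χ × Fin χ) (Fin χ × Fin χ) ℂ) - z • T B) *
      (∑ n ∈ Finset.range N, z ^ n • (T B) ^ n) = 1 - z ^ N • (T B) ^ N := by
  rw [Finset.mul_sum]
  have hterm : ∀ n : ℕ, ((1 : Matrix (Fin χ × Fin χ) (Fin χ × Fin χ) ℂ) - z • T B) *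
      (z ^ n • (T B) ^ n) = z ^ n • (T B) ^ n - z ^ (n+1) • (T B) ^ (n+1) := by
    intro n
    rw [sub_mul, one_mul, smul_mul_assoc, mul_smul_comm, smul_smul, ← pow_succ', ← pow_succ']
  simp_rw [hterm]
  rw [Finset.sum_range_sub' (fun n => z ^ n • (T B) ^ n) N]
  simp

end TransferPFMain

namespace TransferPFMain
open TransferPF TransferPF2 TransferPF3 Filter Matrix
open scoped NNReal ENNReal Kronecker

attribute [local instance] Matrix.linftyOpNormedRing Matrix.linftyOpNormedAlgebra

set_option maxHeartbeats 1000000 in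
theorem main {χ d : ℕ} (hχ : 1 ≤ χ) (B : Fin d → Matrix (Fin χ) (Fin χ) ℂ) :
    ∃ lam₁ : ℝ, 0 ≤ lam₁ ∧ (lam₁ : ℂ) ∈ spectrum ℂ (T B) ∧
      ∀ μ ∈ spectrum ℂ (T B), ‖μ‖ ≤ lam₁ := by
  haveI : Nonempty (Fin χ) := ⟨⟨0, hχ⟩⟩
  haveI : Nontrivial (Matrix (Fin χ × Fin χ) (Fin χ × Fin χ) ℂ) := by
    refine ⟨0, 1, fun h => ?_⟩
    have := congrFun (congrFun h (Classical.arbitrary _)) (Classical.arbitrary _)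
    simp [Matrix.one_apply] at this
  obtain ⟨μ₀, hμ₀mem, hμ₀eq⟩ := spectrum.exists_nnnorm_eq_spectralRadius (T B)
  set ρ : ℝ := ‖μ₀‖ with hρdef
  have hρ_max : ∀ μ ∈ spectrum ℂ (T B), ‖μ‖ ≤ ρ := by
    intro μ hμ
    have h1 : (‖μ‖₊ : ℝ≥0∞) ≤ spectralRadius ℂ (T B) :=
      le_iSup₂ (f := fun k (_ : k ∈ spectrum ℂ (T B)) => (‖k‖₊ : ℝ≥0∞)) μ hμ
    rw [← hμ₀eq, ENNReal.coe_le_coe] at h1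
    have : ‖μ‖ ≤ ‖μ₀‖ := h1
    exact this
  by_cases hmem : (ρ : ℂ) ∈ spectrum ℂ (T B)
  · exact ⟨ρ, norm_nonneg μ₀, hmem, hρ_max⟩
  exfalso
  have hρ_pos : 0 < ρ := by
    rcases (norm_nonneg μ₀).lt_or_eq with h | h
    · exact h
    · exfalso
      apply hmem
      have hz : μ₀ = 0 := by rwa [eq_comm, norm_eq_zero] at h
      have : (ρ : ℂ) = μ₀ := by rw [hρdef, ← h, hz]; simp
      exact this ▸ hμ₀mem
  have hρinv_pos : 0 < ρ⁻¹ := by positivity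
  -- invertibility of 1 - x • T on the interval (0, ρ⁻¹]
  have hunit : ∀ x : ℝ, ρ⁻¹/2 ≤ x → x ≤ ρ⁻¹ →
      IsUnit ((1 : Matrix (Fin χ × Fin χ) (Fin χ × Fin χ) ℂ) - (x:ℂ) • T B) := by
    intro x hx1 hx2
    have hx0 : 0 < x := lt_of_lt_of_le (by positivity) hx1
    have hnot : ((x⁻¹ : ℝ) : ℂ) ∉ spectrum ℂ (T B) := by
      rcases hx2.lt_or_eq with h | h
      · intro hc
        have hle := hρ_max _ hc
        rw [Complex.norm_real, Real.norm_eq_abs, abs_of_pos (by positivity)] at hle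
        have hgt : ρ < x⁻¹ := by
          have := inv_strictAnti₀ hx0 h
          rwa [inv_inv] at this
        linarith
      · rw [h, inv_inv]; exact hmem
    have hu := spectrum.notMem_iff.mp hnot
    have key : (1 : Matrix (Fin χ × Fin χ) (Fin χ × Fin χ) ℂ) - (x:ℂ) • T B
        = (x:ℂ) • ((algebraMap ℂ (Matrix (Fin χ × Fin χ) (Fin χ × Fin χ) ℂ)) ((x⁻¹:ℝ):ℂ)
            - T B) := by
      rw [Algebra.algebraMap_eq_smul_one, smul_sub, smul_smul]
      push_cast
      rw [mul_inv_cancel₀ (show ((x:ℝ):ℂ) ≠ 0 by exact_mod_cast hx0.ne'), one_smul]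
    rw [key, Algebra.smul_def]
    exact ((isUnit_iff_ne_zero.mpr (show ((x:ℝ):ℂ) ≠ 0 by exact_mod_cast hx0.ne')).map
      (algebraMap ℂ (Matrix (Fin χ × Fin χ) (Fin χ × Fin χ) ℂ))).mul hu
  -- uniform bound on the resolvent over the compact interval J
  have hcont : ContinuousOn
      (fun x : ℝ => Ring.inverse ((1 : Matrix (Fin χ × Fin χ) (Fin χ × Fin χ) ℂ) - (x:ℂ) • T B))
      (Set.Icc (ρ⁻¹/2) ρ⁻¹) := by
    intro x hx
    have hu := hunit x hx.1 hx.2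
    have hc1 : ContinuousAt (fun x : ℝ =>
        (1 : Matrix (Fin χ × Fin χ) (Fin χ × Fin χ) ℂ) - (x:ℂ) • T B) x := by
      apply ContinuousAt.sub continuousAt_const
      exact (Complex.continuous_ofReal.continuousAt).smul continuousAt_const
    apply ContinuousAt.continuousWithinAt
    have h2 : ContinuousAt Ring.inverse
        ((1 : Matrix (Fin χ × Fin χ) (Fin χ × Fin χ) ℂ) - (x:ℂ) • T B) := by
      have := NormedRing.inverse_continuousAt hu.unit
      rwa [IsUnit.unit_spec] at this
    exact ContinuousAt.comp (g := Ring.inverse)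
      (f := fun x : ℝ => (1 : Matrix (Fin χ × Fin χ) (Fin χ × Fin χ) ℂ) - (x:ℂ) • T B) h2 hc1
  obtain ⟨C, hC⟩ := isCompact_Icc.exists_bound_of_continuousOn hcont
  have hnorm1 : ‖(1 : Matrix (Fin χ × Fin χ) (Fin χ × Fin χ) ℂ)‖ = 1 := by
    rw [← Matrix.diagonal_one, Matrix.linfty_opNorm_diagonal]
    simp
  -- uniform bound on partial sums with error term
  have hPid : ∀ (N : ℕ) (x : ℝ), ρ⁻¹/2 ≤ x → x ≤ ρ⁻¹ →
      ∑ n ∈ Finset.range N, aSeq B n * x ^ n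
        ≤ ((χ:ℝ)*χ) * (C * (1 + x ^ N * ‖(T B) ^ N‖)) := by
    intro N x hx1 hx2
    have hu := hunit x hx1 hx2
    have hx0 : 0 < x := lt_of_lt_of_le (by positivity) hx1
    have hS : (∑ n ∈ Finset.range N, ((x:ℂ)) ^ n • (T B) ^ n)
        = Ring.inverse ((1 : Matrix (Fin χ × Fin χ) (Fin χ × Fin χ) ℂ) - (x:ℂ) • T B)
            * (1 - ((x:ℂ)) ^ N • (T B) ^ N) := by
      have h1 := telescope B (x:ℂ) N
      have h2 := congrArg (fun Y =>
        Ring.inverse ((1 : Matrix (Fin χ × Fin χ) (Fin χ × Fin χ) ℂ) - (x:ℂ) • T B) * Y) h1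
      simpa only [← mul_assoc, Ring.inverse_mul_cancel _ hu, one_mul] using h2
    have hlin : ((∑ n ∈ Finset.range N, aSeq B n * x ^ n : ℝ) : ℂ)
        = linD χ (Ring.inverse ((1 : Matrix (Fin χ × Fin χ) (Fin χ × Fin χ) ℂ) - (x:ℂ) • T B)
            * (1 - ((x:ℂ)) ^ N • (T B) ^ N)) := by
      rw [← hS, map_sum]
      push_cast
      refine Finset.sum_congr rfl fun n _ => ?_
      rw [LinearMap.map_smul, linD_pow, smul_eq_mul]
      push_cast
      ring
    have hnonneg : 0 ≤ ∑ n ∈ Finset.range N, aSeq B n * x ^ n :=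
      Finset.sum_nonneg fun n _ => mul_nonneg (aSeq_nonneg B n) (by positivity)
    have habs : (∑ n ∈ Finset.range N, aSeq B n * x ^ n)
        = ‖((∑ n ∈ Finset.range N, aSeq B n * x ^ n : ℝ) : ℂ)‖ := by
      rw [Complex.norm_real, Real.norm_eq_abs, abs_of_nonneg hnonneg]
    rw [habs, hlin]
    have hDnorm : ‖(1 : Matrix (Fin χ × Fin χ) (Fin χ × Fin χ) ℂ) - ((x:ℂ)) ^ N • (T B) ^ N‖
        ≤ 1 + x ^ N * ‖(T B) ^ N‖ := by
      calc ‖(1 : Matrix (Fin χ × Fin χ) (Fin χ × Fin χ) ℂ) - ((x:ℂ)) ^ N • (T B) ^ N‖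
          ≤ ‖(1 : Matrix (Fin χ × Fin χ) (Fin χ × Fin χ) ℂ)‖ + ‖((x:ℂ)) ^ N • (T B) ^ N‖ :=
            norm_sub_le _ _
        _ = 1 + x ^ N * ‖(T B) ^ N‖ := by
            rw [hnorm1, norm_smul, norm_pow]
            congr 2
            rw [Complex.norm_real, Real.norm_eq_abs, abs_of_pos hx0]
    calc ‖linD χ _‖ ≤ ((χ:ℝ)*χ) * ‖Ring.inverse
          ((1 : Matrix (Fin χ × Fin χ) (Fin χ × Fin χ) ℂ) - (x:ℂ) • T B)
            * (1 - ((x:ℂ)) ^ N • (T B) ^ N)‖ := linD_bound _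
      _ ≤ ((χ:ℝ)*χ) * (C * (1 + x ^ N * ‖(T B) ^ N‖)) := by
          apply mul_le_mul_of_nonneg_left _ (by positivity)
          calc ‖Ring.inverse ((1 : Matrix (Fin χ × Fin χ) (Fin χ × Fin χ) ℂ) - (x:ℂ) • T B)
              * (1 - ((x:ℂ)) ^ N • (T B) ^ N)‖
              ≤ ‖Ring.inverse ((1 : Matrix (Fin χ × Fin χ) (Fin χ × Fin χ) ℂ) - (x:ℂ) • T B)‖
                * ‖(1 : Matrix (Fin χ × Fin χ) (Fin χ × Fin χ) ℂ) - ((x:ℂ)) ^ N • (T B) ^ N‖ :=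
                norm_mul_le _ _
            _ ≤ C * (1 + x ^ N * ‖(T B) ^ N‖) := by
                have hCx := hC x ⟨hx1, hx2⟩
                have h0R : (0:ℝ) ≤ ‖(1 : Matrix (Fin χ × Fin χ) (Fin χ × Fin χ) ℂ)
                    - ((x:ℂ)) ^ N • (T B) ^ N‖ := norm_nonneg _
                exact mul_le_mul hCx hDnorm h0R ((norm_nonneg _).trans hCx)
  -- drop the error term in the limit N → ∞, for x < ρ⁻¹
  have hPK : ∀ (N₀ : ℕ) (x : ℝ), ρ⁻¹/2 ≤ x → x < ρ⁻¹ →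
      ∑ n ∈ Finset.range N₀, aSeq B n * x ^ n ≤ ((χ:ℝ)*χ) * (C * 1) := by
    intro N₀ x hx1 hx2
    have hx0 : 0 < x := lt_of_lt_of_le (by positivity) hx1
    have hρx : ρ < x⁻¹ := by
      have := inv_strictAnti₀ hx0 hx2
      rwa [inv_inv] at this
    set r : ℝ≥0 := ⟨(ρ + x⁻¹)/2, by positivity⟩ with hr
    have hrρ : ρ < (r:ℝ) := by
      simp only [hr, NNReal.coe_mk]
      change ρ < (ρ + x⁻¹)/2; linarith
    have hrx : (r:ℝ) < x⁻¹ := by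
      simp only [hr, NNReal.coe_mk]
      change (ρ + x⁻¹)/2 < x⁻¹; linarith
    have hspec : spectralRadius ℂ (T B) < (r : ℝ≥0∞) := by
      rw [← hμ₀eq]
      rw [ENNReal.coe_lt_coe, ← NNReal.coe_lt_coe, coe_nnnorm]
      exact hrρ
    have hev := eventually_norm_pow_lt (T B) hspec
    have hxr : x * (r:ℝ) < 1 := by
      have := mul_lt_mul_of_pos_left hrx hx0
      rwa [mul_inv_cancel₀ hx0.ne'] at this
    have htend0 : Filter.Tendsto (fun N : ℕ => x ^ N * ‖(T B) ^ N‖) atTop (nhds 0) := by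
      apply squeeze_zero' (Filter.Eventually.of_forall fun N => by positivity)
      · filter_upwards [hev] with N hN
        calc x ^ N * ‖(T B) ^ N‖ ≤ x ^ N * (r:ℝ) ^ N :=
              mul_le_mul_of_nonneg_left hN (by positivity)
          _ = (x * (r:ℝ)) ^ N := (mul_pow _ _ _).symm
      · exact tendsto_pow_atTop_nhds_zero_of_lt_one (by positivity) hxr
    have htendRHS : Filter.Tendsto
        (fun N : ℕ => ((χ:ℝ)*χ) * (C * (1 + x ^ N * ‖(T B) ^ N‖))) atTop
        (nhds (((χ:ℝ)*χ) * (C * 1))) := by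
      have h1 : Filter.Tendsto (fun N : ℕ => 1 + x ^ N * ‖(T B) ^ N‖) atTop (nhds 1) := by
        have := tendsto_const_nhds (x := (1:ℝ)) (f := atTop (α := ℕ)) |>.add htend0
        simpa using this
      exact tendsto_const_nhds.mul (tendsto_const_nhds.mul h1)
    apply ge_of_tendsto htendRHS
    filter_upwards [Filter.eventually_ge_atTop N₀] with N hN
    calc ∑ n ∈ Finset.range N₀, aSeq B n * x ^ n
        ≤ ∑ n ∈ Finset.range N, aSeq B n * x ^ n := by
          apply Finset.sum_le_sum_of_subset_of_nonneg (Finset.range_subset_range.mpr hN)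
          intro n _ _
          exact mul_nonneg (aSeq_nonneg B n) (by positivity)
      _ ≤ _ := hPid N x hx1 (le_of_lt hx2)
  -- pass to the endpoint x = ρ⁻¹
  have hPti : ∀ N₀ : ℕ, ∑ n ∈ Finset.range N₀, aSeq B n * (ρ⁻¹) ^ n ≤ ((χ:ℝ)*χ) * (C * 1) := by
    intro N₀
    have hcont2 : Continuous (fun x : ℝ => ∑ n ∈ Finset.range N₀, aSeq B n * x ^ n) := by
      apply continuous_finset_sum
      intro n _
      exact continuous_const.mul (continuous_pow n)
    have hc := Filter.Tendsto.mono_left (hcont2.tendsto ρ⁻¹)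
      (nhdsWithin_le_nhds : nhdsWithin ρ⁻¹ (Set.Iio ρ⁻¹) ≤ _)
    apply le_of_tendsto hc
    filter_upwards [Ioo_mem_nhdsLT_of_mem
      (⟨by linarith, le_refl ρ⁻¹⟩ : ρ⁻¹ ∈ Set.Ioc (ρ⁻¹/2) ρ⁻¹)] with y hy
    exact hPK N₀ y (le_of_lt hy.1) hy.2
  have hsumma : Summable (fun n => aSeq B n * (ρ⁻¹) ^ n) :=
    summable_of_sum_range_le (fun n => mul_nonneg (aSeq_nonneg B n) (by positivity)) hPti
  -- Neumann series at z = μ₀⁻¹ shows μ₀ ∉ spectrum: contradiction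
  have hμ₀ne : μ₀ ≠ 0 := by
    intro h
    apply hρ_pos.ne'
    rw [hρdef, h, norm_zero]
  set z : ℂ := μ₀⁻¹ with hz
  have hzabs : ‖z‖ = ρ⁻¹ := by rw [hz, norm_inv]
  have hnormle : ∀ n : ℕ, ‖z ^ n • (T B) ^ n‖ ≤ ((χ:ℝ)*χ) * (aSeq B n * (ρ⁻¹)^n) := by
    intro n
    rw [norm_smul, norm_pow]
    have h1 : ‖(T B) ^ n‖ ≤ ((χ:ℝ)*χ) * aSeq B n := by
      have := norm_le_card_mul ((T B)^n) (aSeq_nonneg B n) (entry_bound B n)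
      rw [Fintype.card_prod, Fintype.card_fin] at this
      push_cast at this
      linarith
    have h2 : ‖z‖ ^ n = (ρ⁻¹)^n := by rw [hzabs]
    calc ‖z‖^n * ‖(T B)^n‖ ≤ (ρ⁻¹)^n * (((χ:ℝ)*χ) * aSeq B n) := by
          rw [h2]
          exact mul_le_mul_of_nonneg_left h1 (by positivity)
      _ = ((χ:ℝ)*χ) * (aSeq B n * (ρ⁻¹)^n) := by ring
  have hsummable : Summable (fun n : ℕ => z ^ n • (T B) ^ n) := by
    apply Summable.of_norm
    exact Summable.of_nonneg_of_le (fun n => norm_nonneg _) hnormle (hsumma.mul_left _)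
  set S := ∑' n : ℕ, z ^ n • (T B) ^ n with hSdef
  have hshift : Summable (fun n : ℕ => z ^ (n+1) • (T B) ^ (n+1)) :=
    (summable_nat_add_iff 1).mpr hsummable
  have htail : ∑' n : ℕ, z ^ (n+1) • (T B) ^ (n+1) = S - 1 := by
    have h0 := Summable.tsum_eq_zero_add hsummable
    rw [pow_zero, pow_zero, one_smul] at h0
    exact eq_sub_of_add_eq (by rw [add_comm]; exact h0.symm)
  have hterm : ∀ n : ℕ, ((1 : Matrix (Fin χ × Fin χ) (Fin χ × Fin χ) ℂ) - z • T B) * (z ^ n • (T B) ^ n)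
      = z ^ n • (T B) ^ n - z ^ (n+1) • (T B) ^ (n+1) := by
    intro n
    rw [sub_mul, one_mul, smul_mul_assoc, mul_smul_comm, smul_smul, ← pow_succ', ← pow_succ']
  have hterm' : ∀ n : ℕ, (z ^ n • (T B) ^ n) * ((1 : Matrix (Fin χ × Fin χ) (Fin χ × Fin χ) ℂ) - z • T B)
      = z ^ n • (T B) ^ n - z ^ (n+1) • (T B) ^ (n+1) := by
    intro n
    rw [mul_sub, mul_one, smul_mul_assoc, mul_smul_comm, smul_smul, mul_comm (z^n) z,
      ← pow_succ', ← pow_succ]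
  have hL : ((1 : Matrix (Fin χ × Fin χ) (Fin χ × Fin χ) ℂ) - z • T B) * S = 1 := by
    have hmul : ((1 : Matrix (Fin χ × Fin χ) (Fin χ × Fin χ) ℂ) - z • T B) * S
        = ∑' n : ℕ, ((1 : Matrix (Fin χ × Fin χ) (Fin χ × Fin χ) ℂ) - z • T B) * (z ^ n • (T B) ^ n) :=
      (hsummable.tsum_mul_left _).symm
    rw [hmul]
    simp_rw [hterm]
    rw [Summable.tsum_sub hsummable hshift, htail]
    abel
  have hR : S * ((1 : Matrix (Fin χ × Fin χ) (Fin χ × Fin χ) ℂ) - z • T B) = 1 := by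
    have hmul : S * ((1 : Matrix (Fin χ × Fin χ) (Fin χ × Fin χ) ℂ) - z • T B)
        = ∑' n : ℕ, (z ^ n • (T B) ^ n) * ((1 : Matrix (Fin χ × Fin χ) (Fin χ × Fin χ) ℂ) - z • T B) :=
      (hsummable.tsum_mul_right _).symm
    rw [hmul]
    simp_rw [hterm']
    rw [Summable.tsum_sub hsummable hshift, htail]
    abel
  have hUnit : IsUnit ((1 : Matrix (Fin χ × Fin χ) (Fin χ × Fin χ) ℂ) - z • T B) := isUnit_iff_exists.mpr ⟨S, hL, hR⟩
  have hfin : IsUnit (algebraMap ℂ (Matrix (Fin χ × Fin χ) (Fin χ × Fin χ) ℂ) μ₀ - T B) := by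
    have key : algebraMap ℂ (Matrix (Fin χ × Fin χ) (Fin χ × Fin χ) ℂ) μ₀ - T B = μ₀ • ((1 : Matrix (Fin χ × Fin χ) (Fin χ × Fin χ) ℂ) - z • T B) := by
      rw [Algebra.algebraMap_eq_smul_one, smul_sub, smul_smul, hz, mul_inv_cancel₀ hμ₀ne,
        one_smul]
    rw [key, Algebra.smul_def]
    exact ((isUnit_iff_ne_zero.mpr hμ₀ne).map (algebraMap ℂ (Matrix (Fin χ × Fin χ) (Fin χ × Fin χ) ℂ))).mul hUnit
  exact (spectrum.notMem_iff.mpr hfin) hμ₀mem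

end TransferPFMain


/-- Perron–Frobenius property of the MPS transfer matrix `T = Σ_s B^s ⊗ conj(B^s)`:
there is a real nonnegative eigenvalue `λ₁` of `T` with `|μ| ≤ λ₁` for every eigenvalue
`μ` of `T`, i.e. the spectral radius is itself an eigenvalue. -/
theorem transfer_matrix_spectral_radius_is_eigenvalue (χ d : ℕ) (hχ : 1 ≤ χ) (hd : 1 ≤ d)
    (B : Fin d → Matrix (Fin χ) (Fin χ) ℂ) :
    ∃ lam₁ : ℝ, 0 ≤ lam₁ ∧
      (lam₁ : ℂ) ∈ spectrum ℂ (∑ s, (B s) ⊗ₖ ((B s).map (starRingEnd ℂ))) ∧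
      ∀ μ ∈ spectrum ℂ (∑ s, (B s) ⊗ₖ ((B s).map (starRingEnd ℂ))),
        ‖μ‖ ≤ lam₁ := by
  exact TransferPFMain.main hχ B
end

section
/- Let χ₁, χ₂ ≥ 1 and d ≥ 1, let A¹, …, A^d be χ₁×χ₁ complex matrices and B¹, …, B^d be χ₂×χ₂ complex matrices. Let T₁₂ = Σ_s A^s ⊗ conj(B^s), T₁₁ = Σ_s A^s ⊗ conj(A^s), and T₂₂ = Σ_s B^s ⊗ conj(B^s), where conj denotes the entrywise complex conjugate and ⊗ the Kronecker product. Then the spectral radii satisfy ρ(T₁₂)² ≤ ρ(T₁₁) · ρ(T₂₂). In particular, if ρ(T₁₁) = ρ(T₂₂) = 1 (normalized MPS), then every eigenvalue of the mixed transfer matrix T₁₂ has modulus at most 1. -/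
open Matrix
open scoped Kronecker ENNReal
open scoped NNReal

lemma kron_pow_formula {χ₁ χ₂ d : ℕ} (A : Fin d → Matrix (Fin χ₁) (Fin χ₁) ℂ)
    (B : Fin d → Matrix (Fin χ₂) (Fin χ₂) ℂ) (n : ℕ) :
    (∑ s, (A s) ⊗ₖ ((B s).map (starRingEnd ℂ))) ^ n =
      ∑ w : Fin n → Fin d, ((List.ofFn fun t => A (w t)).prod) ⊗ₖ
        (((List.ofFn fun t => B (w t)).prod).map (starRingEnd ℂ)) := by
  induction n with
  | zero =>
    simp [List.ofFn_zero, Matrix.map_one]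
  | succ n ih =>
    rw [pow_succ', ih, Finset.sum_mul_sum,
      ← Equiv.sum_comp (Fin.consEquiv fun _ => Fin d)
        (fun w : Fin (n+1) → Fin d => ((List.ofFn fun t => A (w t)).prod) ⊗ₖ
          (((List.ofFn fun t => B (w t)).prod).map (starRingEnd ℂ))),
      Fintype.sum_prod_type]
    refine Finset.sum_congr rfl fun s _ => Finset.sum_congr rfl fun w _ => ?_
    rw [← Matrix.mul_kronecker_mul, ← Matrix.map_mul]
    simp [List.ofFn_succ, Fin.consEquiv]

lemma nnnorm_sum_mul_conj {ι : Type*} [Fintype ι] (f : ι → ℂ) :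
    ‖∑ w : ι, f w * (starRingEnd ℂ) (f w)‖₊ = ∑ w : ι, ‖f w‖₊ ^ 2 := by
  have h : ∑ w : ι, f w * (starRingEnd ℂ) (f w) = (((∑ w : ι, ‖f w‖₊ ^ 2 : ℝ≥0) : ℝ) : ℂ) := by
    push_cast
    refine Finset.sum_congr rfl fun w _ => ?_
    rw [Complex.mul_conj]
    norm_cast
    rw [← Complex.sq_norm]
  rw [h, Complex.nnnorm_real,
    Real.nnnorm_of_nonneg (∑ w : ι, ‖f w‖₊ ^ 2 : ℝ≥0).coe_nonneg]
  exact Subtype.ext rfl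

lemma nnnorm_cs {ι : Type*} [Fintype ι] (a b : ι → ℂ) :
    ‖∑ w : ι, a w * (starRingEnd ℂ) (b w)‖₊ ^ 2 ≤
      (∑ w : ι, ‖a w‖₊ ^ 2) * (∑ w : ι, ‖b w‖₊ ^ 2) := by
  calc ‖∑ w : ι, a w * (starRingEnd ℂ) (b w)‖₊ ^ 2
      ≤ (∑ w : ι, ‖a w‖₊ * ‖b w‖₊) ^ 2 := by
        gcongr
        refine (nnnorm_sum_le _ _).trans (le_of_eq ?_)
        refine Finset.sum_congr rfl fun w _ => ?_
        rw [nnnorm_mul, RCLike.nnnorm_conj]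
    _ ≤ (∑ w : ι, ‖a w‖₊ ^ 2) * (∑ w : ι, ‖b w‖₊ ^ 2) :=
        Finset.sum_mul_sq_le_sq_mul_sq Finset.univ _ _

attribute [local instance] Matrix.linftyOpNormedRing Matrix.linftyOpNormedAlgebra

lemma entry_le_linfty {m : Type*} [Fintype m] [DecidableEq m]
    (M : Matrix m m ℂ) (i : m) (j : m) : ‖M i j‖₊ ≤ ‖M‖₊ := by
  rw [Matrix.linfty_opNNNorm_def]
  exact le_trans (Finset.single_le_sum (f := fun j => ‖M i j‖₊)
    (fun _ _ => zero_le) (Finset.mem_univ j))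
    (Finset.le_sup (f := fun i => ∑ j, ‖M i j‖₊) (Finset.mem_univ i))

lemma key_bound {χ₁ χ₂ d : ℕ} (A : Fin d → Matrix (Fin χ₁) (Fin χ₁) ℂ)
    (B : Fin d → Matrix (Fin χ₂) (Fin χ₂) ℂ) (n : ℕ) :
    ‖(∑ s, (A s) ⊗ₖ ((B s).map (starRingEnd ℂ))) ^ n‖₊ ^ 2 ≤
      ((χ₁ * χ₂ : ℕ) : ℝ≥0) ^ 2 *
      (‖(∑ s, (A s) ⊗ₖ ((A s).map (starRingEnd ℂ))) ^ n‖₊ *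
       ‖(∑ s, (B s) ⊗ₖ ((B s).map (starRingEnd ℂ))) ^ n‖₊) := by
  set K := ‖(∑ s, (A s) ⊗ₖ ((A s).map (starRingEnd ℂ))) ^ n‖₊ *
       ‖(∑ s, (B s) ⊗ₖ ((B s).map (starRingEnd ℂ))) ^ n‖₊ with hK
  have hentry : ∀ (p q : Fin χ₁ × Fin χ₂),
      ‖((∑ s, (A s) ⊗ₖ ((B s).map (starRingEnd ℂ))) ^ n) p q‖₊ ≤ NNReal.sqrt K := by
    rintro ⟨i, j⟩ ⟨k, l⟩
    rw [NNReal.le_sqrt_iff_sq_le]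
    have e12 : ((∑ s, (A s) ⊗ₖ ((B s).map (starRingEnd ℂ))) ^ n) (i, j) (k, l) =
        ∑ w : Fin n → Fin d, ((List.ofFn fun t => A (w t)).prod i k) *
          (starRingEnd ℂ) ((List.ofFn fun t => B (w t)).prod j l) := by
      rw [kron_pow_formula]
      simp [Matrix.sum_apply, Matrix.kroneckerMap_apply, Matrix.map_apply]
    have e11 : ((∑ s, (A s) ⊗ₖ ((A s).map (starRingEnd ℂ))) ^ n) (i, i) (k, k) =
        ∑ w : Fin n → Fin d, ((List.ofFn fun t => A (w t)).prod i k) *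
          (starRingEnd ℂ) ((List.ofFn fun t => A (w t)).prod i k) := by
      rw [kron_pow_formula]
      simp [Matrix.sum_apply, Matrix.kroneckerMap_apply, Matrix.map_apply]
    have e22 : ((∑ s, (B s) ⊗ₖ ((B s).map (starRingEnd ℂ))) ^ n) (j, j) (l, l) =
        ∑ w : Fin n → Fin d, ((List.ofFn fun t => B (w t)).prod j l) *
          (starRingEnd ℂ) ((List.ofFn fun t => B (w t)).prod j l) := by
      rw [kron_pow_formula]
      simp [Matrix.sum_apply, Matrix.kroneckerMap_apply, Matrix.map_apply]
    rw [e12]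
    refine (nnnorm_cs _ _).trans ?_
    rw [hK]
    gcongr
    · rw [← nnnorm_sum_mul_conj, ← e11]
      exact entry_le_linfty _ _ _
    · rw [← nnnorm_sum_mul_conj, ← e22]
      exact entry_le_linfty _ _ _
  have hnorm : ‖(∑ s, (A s) ⊗ₖ ((B s).map (starRingEnd ℂ))) ^ n‖₊ ≤
      ((χ₁ * χ₂ : ℕ) : ℝ≥0) * NNReal.sqrt K := by
    rw [Matrix.linfty_opNNNorm_def]
    refine Finset.sup_le fun p _ => ?_
    calc ∑ q, ‖((∑ s, (A s) ⊗ₖ ((B s).map (starRingEnd ℂ))) ^ n) p q‖₊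
        ≤ (Finset.univ : Finset (Fin χ₁ × Fin χ₂)).card • NNReal.sqrt K :=
          Finset.sum_le_card_nsmul _ _ _ (fun q _ => hentry p q)
      _ = ((χ₁ * χ₂ : ℕ) : ℝ≥0) * NNReal.sqrt K := by
          simp [Finset.card_univ, mul_comm, nsmul_eq_mul]
  calc ‖(∑ s, (A s) ⊗ₖ ((B s).map (starRingEnd ℂ))) ^ n‖₊ ^ 2
      ≤ (((χ₁ * χ₂ : ℕ) : ℝ≥0) * NNReal.sqrt K) ^ 2 := by gcongr
    _ = ((χ₁ * χ₂ : ℕ) : ℝ≥0) ^ 2 * K := by rw [mul_pow, NNReal.sq_sqrt]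

lemma const_rpow_tendsto_one {c : ℝ≥0∞} (hc : c ≠ ⊤) (hc1 : 1 ≤ c) :
    Filter.Tendsto (fun n : ℕ => c ^ (1 / (n : ℝ))) Filter.atTop (nhds 1) := by
  rw [tendsto_order]
  constructor
  · intro y hy
    filter_upwards with n
    exact lt_of_lt_of_le hy (by
      simpa using ENNReal.rpow_le_rpow hc1 (by positivity : (0:ℝ) ≤ 1 / (n:ℝ)))
  · intro y hy
    obtain ⟨z, hz1, hzy⟩ := exists_between hy
    filter_upwards [ENNReal.eventually_pow_one_div_le hc hz1] with n hn
    exact lt_of_le_of_lt hn hzy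

set_option maxHeartbeats 2000000
set_option synthInstance.maxHeartbeats 1000000

/-- Cauchy–Schwarz bound for the mixed MPS transfer matrix: with
`T₁₂ = Σ_s A^s ⊗ conj(B^s)`, `T₁₁ = Σ_s A^s ⊗ conj(A^s)`, `T₂₂ = Σ_s B^s ⊗ conj(B^s)`,
the spectral radii satisfy `ρ(T₁₂)² ≤ ρ(T₁₁)·ρ(T₂₂)`; in particular if
`ρ(T₁₁) = ρ(T₂₂) = 1` then every eigenvalue of `T₁₂` has modulus at most `1`
(the fidelity-per-site has `|F_s| ≤ 1`). -/
theorem mixed_transfer_matrix_spectral_radius_bound (χ₁ χ₂ d : ℕ)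
    (h₁ : 1 ≤ χ₁) (h₂ : 1 ≤ χ₂) (hd : 1 ≤ d)
    (A : Fin d → Matrix (Fin χ₁) (Fin χ₁) ℂ)
    (B : Fin d → Matrix (Fin χ₂) (Fin χ₂) ℂ) :
    spectralRadius ℂ (∑ s, (A s) ⊗ₖ ((B s).map (starRingEnd ℂ))) ^ 2 ≤
      spectralRadius ℂ (∑ s, (A s) ⊗ₖ ((A s).map (starRingEnd ℂ))) *
      spectralRadius ℂ (∑ s, (B s) ⊗ₖ ((B s).map (starRingEnd ℂ))) ∧
    (spectralRadius ℂ (∑ s, (A s) ⊗ₖ ((A s).map (starRingEnd ℂ))) = 1 →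
      spectralRadius ℂ (∑ s, (B s) ⊗ₖ ((B s).map (starRingEnd ℂ))) = 1 →
      ∀ μ ∈ spectrum ℂ (∑ s, (A s) ⊗ₖ ((B s).map (starRingEnd ℂ))),
        ‖μ‖ ≤ 1) := by
  haveI : Nonempty (Fin χ₁ × Fin χ₂) := ⟨(⟨0, h₁⟩, ⟨0, h₂⟩)⟩
  haveI : Nonempty (Fin χ₁ × Fin χ₁) := ⟨(⟨0, h₁⟩, ⟨0, h₁⟩)⟩
  haveI : Nonempty (Fin χ₂ × Fin χ₂) := ⟨(⟨0, h₂⟩, ⟨0, h₂⟩)⟩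
  set T₁₂ := ∑ s, (A s) ⊗ₖ ((B s).map (starRingEnd ℂ)) with hT12
  set T₁₁ := ∑ s, (A s) ⊗ₖ ((A s).map (starRingEnd ℂ)) with hT11
  set T₂₂ := ∑ s, (B s) ⊗ₖ ((B s).map (starRingEnd ℂ)) with hT22
  set c : ℝ≥0∞ := (((χ₁ * χ₂ : ℕ) : ℝ≥0) : ℝ≥0∞) ^ 2 with hc
  have hcne : c ≠ ⊤ := by
    rw [hc]; exact ENNReal.pow_ne_top ENNReal.coe_ne_top
  have hc1 : 1 ≤ c := by
    rw [hc]
    have : (1 : ℝ≥0∞) ≤ ((χ₁ * χ₂ : ℕ) : ℝ≥0) := by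
      simp only [ENNReal.one_le_coe_iff]
      exact_mod_cast Nat.one_le_iff_ne_zero.mpr (Nat.mul_ne_zero (by omega) (by omega))
    calc (1:ℝ≥0∞) = 1 ^ 2 := by norm_num
      _ ≤ _ := by gcongr
  -- main inequality
  have main : spectralRadius ℂ T₁₂ ^ 2 ≤
      spectralRadius ℂ T₁₁ * spectralRadius ℂ T₂₂ := by
    -- per-n bound
    have step : ∀ n : ℕ, spectralRadius ℂ T₁₂ ^ 2 ≤
        c ^ (1 / ((n+1) : ℝ)) *
        ((‖T₁₁ ^ (n+1)‖₊ : ℝ≥0∞) ^ (1 / ((n+1) : ℝ)) *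
         (‖T₂₂ ^ (n+1)‖₊ : ℝ≥0∞) ^ (1 / ((n+1) : ℝ))) := by
      intro n
      have h0 : (0:ℝ) ≤ 1 / ((n+1) : ℝ) := by positivity
      have hspec := spectrum.spectralRadius_le_pow_nnnorm_pow_one_div ℂ T₁₂ n
      rw [nnnorm_one, ENNReal.coe_one, ENNReal.one_rpow, mul_one] at hspec
      have hsq : spectralRadius ℂ T₁₂ ^ 2 ≤
          ((‖T₁₂ ^ (n+1)‖₊ ^ 2 : ℝ≥0) : ℝ≥0∞) ^ (1 / ((n+1) : ℝ)) := by
        calc spectralRadius ℂ T₁₂ ^ 2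
            ≤ ((‖T₁₂ ^ (n+1)‖₊ : ℝ≥0∞) ^ (1 / ((n+1) : ℝ))) ^ 2 := by gcongr
          _ = ((‖T₁₂ ^ (n+1)‖₊ ^ 2 : ℝ≥0) : ℝ≥0∞) ^ (1 / ((n+1) : ℝ)) := by
              rw [← ENNReal.rpow_natCast (((‖T₁₂ ^ (n+1)‖₊ : ℝ≥0∞)) ^ (1 / ((n+1) : ℝ))) 2,
                ← ENNReal.rpow_mul, mul_comm, ENNReal.rpow_mul, ENNReal.rpow_natCast,
                ENNReal.coe_pow]
      refine hsq.trans ?_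
      have := key_bound A B (n+1)
      calc ((‖T₁₂ ^ (n+1)‖₊ ^ 2 : ℝ≥0) : ℝ≥0∞) ^ (1 / ((n+1) : ℝ))
          ≤ ((((χ₁ * χ₂ : ℕ) : ℝ≥0) ^ 2 * (‖T₁₁ ^ (n+1)‖₊ * ‖T₂₂ ^ (n+1)‖₊) : ℝ≥0) : ℝ≥0∞) ^
              (1 / ((n+1) : ℝ)) := by
            exact ENNReal.rpow_le_rpow (by exact_mod_cast this) h0
        _ = _ := by
            rw [ENNReal.coe_mul, ENNReal.coe_mul, ENNReal.mul_rpow_of_nonneg _ _ h0,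
              ENNReal.mul_rpow_of_nonneg _ _ h0, ENNReal.coe_pow]
    -- limits
    have t0 : Filter.Tendsto (fun n : ℕ => c ^ (1 / (n : ℝ))) Filter.atTop (nhds 1) :=
      const_rpow_tendsto_one hcne hc1
    have t1 := spectrum.pow_nnnorm_pow_one_div_tendsto_nhds_spectralRadius T₁₁
    have t2 := spectrum.pow_nnnorm_pow_one_div_tendsto_nhds_spectralRadius T₂₂
    have hfin1 : spectralRadius ℂ T₁₁ ≠ ⊤ :=
      ((spectrum.spectralRadius_le_nnnorm (𝕜 := ℂ) T₁₁).trans_lt ENNReal.coe_lt_top).ne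
    have hfin2 : spectralRadius ℂ T₂₂ ≠ ⊤ :=
      ((spectrum.spectralRadius_le_nnnorm (𝕜 := ℂ) T₂₂).trans_lt ENNReal.coe_lt_top).ne
    have t12 : Filter.Tendsto (fun n : ℕ =>
        (‖T₁₁ ^ n‖₊ : ℝ≥0∞) ^ (1 / (n : ℝ)) * (‖T₂₂ ^ n‖₊ : ℝ≥0∞) ^ (1 / (n : ℝ)))
        Filter.atTop (nhds (spectralRadius ℂ T₁₁ * spectralRadius ℂ T₂₂)) :=
      ENNReal.Tendsto.mul t1 (Or.inr hfin2) t2 (Or.inr hfin1)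
    have tall : Filter.Tendsto (fun n : ℕ => c ^ (1 / (n : ℝ)) *
        ((‖T₁₁ ^ n‖₊ : ℝ≥0∞) ^ (1 / (n : ℝ)) * (‖T₂₂ ^ n‖₊ : ℝ≥0∞) ^ (1 / (n : ℝ))))
        Filter.atTop (nhds (spectralRadius ℂ T₁₁ * spectralRadius ℂ T₂₂)) := by
      have := ENNReal.Tendsto.mul t0 (Or.inl one_ne_zero) t12
        (Or.inr ENNReal.one_ne_top)
      simpa using this
    refine ge_of_tendsto tall ?_
    rw [Filter.eventually_atTop]
    exact ⟨1, fun m hm => by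
      obtain ⟨n, rfl⟩ := Nat.exists_eq_add_of_le hm
      simpa [add_comm 1 n] using step n⟩
  refine ⟨main, fun e1 e2 μ hμ => ?_⟩
  rw [e1, e2, mul_one] at main
  have hρ : spectralRadius ℂ T₁₂ ≤ 1 := by
    by_contra h
    push_neg at h
    have : spectralRadius ℂ T₁₂ ≤ spectralRadius ℂ T₁₂ ^ 2 := by
      calc spectralRadius ℂ T₁₂ = spectralRadius ℂ T₁₂ * 1 := (mul_one _).symm
        _ ≤ spectralRadius ℂ T₁₂ * spectralRadius ℂ T₁₂ := mul_le_mul_right h.le _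
        _ = spectralRadius ℂ T₁₂ ^ 2 := (sq _).symm
    exact absurd (this.trans main) (not_le.mpr h)
  have hμle : (‖μ‖₊ : ℝ≥0∞) ≤ spectralRadius ℂ T₁₂ :=
    le_iSup₂ (f := fun k (_ : k ∈ spectrum ℂ T₁₂) => (‖k‖₊ : ℝ≥0∞)) μ hμ
  have : (‖μ‖₊ : ℝ≥0∞) ≤ 1 := hμle.trans hρ
  exact_mod_cast this
end
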